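/- For any integers m and any nonnegative integer k, the ratio of quantum dilogarithms satisfies E(x;q)^{-1}·E(q^m x;q) = Σ_{k≥0} q^{k²/2} [m choose k]_q x^k as formal power series in x, where E(x;q) = Π_{n≥0} (1 + q^{n+1/2} x)^{-1} and [m choose k]_q = (q^{m-k+1};q)_k/(q;q)_k with (a;q)_k = Π_{i=0}^{k-1}(1 - a q^i). -/

import Mathlib

/-!
Since `q = v²`, splitting off the first factor of the product gives the functional equation
`E(q c x) = (1 + v c x) E(c x)`, so `E(x)⁻¹ E(q^m x)` is multiplied by `1 + q^m v x` when
`m` becomes `m + 1`. By the q-Pascal rule `[m+1, k+1] = [m, k+1] + q^(m-k) [m, k]` the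
series `∑ v^(k²) [m, k]_q x^k` satisfies the same recursion, and both sides are `1` at
`m = 0`; since the factors are not zero divisors, the two sides agree for every `m ∈ ℤ`,
negative ones included.

The product defining `E` converges coefficientwise: its factors are `1 + g_m` where the
coefficient of `x^j` in `g_m` has valuation at most `|q|^m |v|^j`, so `∑_t ∏_{m ∈ t} g_m`
over finite sets `t` converges in the complete nonarchimedean field of Laurent series.
-/

noncomputable section
open Finset PowerSeries

/-- The coefficient field: formal Laurent series over ℚ; `v` is the variable,
playing the role of `q^{1/2}`, and `q = v²`. -/
abbrev K : Type := LaurentSeries ℚ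

def v : K := HahnSeries.single 1 1

def q : K := v ^ 2

/-- The q-binomial coefficient `[m choose k]_z` with base `z`,
`[m choose k]_z = (z^{m-k+1};z)_k / (z;z)_k`, for `m : ℤ`, `k : ℕ`. -/
def qbin (z : K) (m : ℤ) (k : ℕ) : K :=
  (∏ i ∈ Finset.range k, (1 - z ^ (m - k + 1 + i))) /
    (∏ i ∈ Finset.range k, (1 - z ^ (i + 1)))

/-- Power series in `x` over `K`, with the product (coefficientwise) topology,
the topology on `K` being the valuation topology of Laurent series. -/
instance : TopologicalSpace (PowerSeries K) :=
  inferInstanceAs (TopologicalSpace ((Unit →₀ ℕ) → K))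

/-- `Edl u c` is the quantum dilogarithm `E(c·x; b) = ∏_{m≥0} (1 + b^{m+1/2}·c·x)⁻¹`
where `u = b^{1/2}`, so that `b^{m+1/2} = u^{2m+1}`. In particular
`Edl v 1 = E(x;q)` and `Edl v (q^m) = E(q^m x; q)`. -/
def Edl (u c : K) : PowerSeries K :=
  ∏' m : ℕ, (1 + PowerSeries.C (c * u ^ (2 * m + 1)) * PowerSeries.X)⁻¹

-- Mathlib's pointwise topology on power series, which the instance above unfolds to.
instance : T2Space (PowerSeries K) := PowerSeries.WithPiTopology.instT2Space K

instance : IsTopologicalRing (PowerSeries K) :=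
  PowerSeries.WithPiTopology.instIsTopologicalRing K

open Filter Topology

namespace Valued

variable {R Γ₀ : Type*} [Ring R] [LinearOrderedCommGroupWithZero Γ₀] [Valued R Γ₀]

instance nonarchimedeanAddGroup : NonarchimedeanAddGroup R where
  is_nonarchimedean U hU := by
    obtain ⟨γ, hγ⟩ := mem_nhds_zero.mp hU
    exact ⟨⟨v.restrict.ltAddSubgroup γ,
      AddSubgroup.isOpen_of_mem_nhds _ (mem_nhds_zero.mpr ⟨γ, subset_rfl⟩)⟩, hγ⟩

theorem tendsto_zero_of_v_le {α : Type*} {l : Filter α} {f d : α → R}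
    (hd : Tendsto d l (𝓝 0)) (h : ∀ᶠ i in l, v (f i) ≤ v (d i)) : Tendsto f l (𝓝 0) := by
  rw [(hasBasis_nhds_zero R Γ₀).tendsto_right_iff] at hd ⊢
  intro γ _
  filter_upwards [hd γ trivial, h] with i hdi hi
  exact ((v.restrict_le_iff).mpr hi).trans_lt hdi

theorem pow_ne_one_of_v_lt_one {x : R} (hx : v x < 1) {n : ℕ} (hn : n ≠ 0) : x ^ n ≠ 1 :=
  fun h => (pow_lt_one₀ zero_le hx hn).ne (by rw [← map_pow, h, map_one])

end Valued

namespace PowerSeries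

variable {R Γ₀ : Type*} [CommRing R] [LinearOrderedCommGroupWithZero Γ₀]

def CoeffGeomBound (v : Valuation R Γ₀) (ε θ : Γ₀) (f : R⟦X⟧) : Prop :=
  ∀ j, v (coeff j f) ≤ ε * θ ^ j

namespace CoeffGeomBound

variable {v : Valuation R Γ₀} {ε ε' θ : Γ₀}

theorem one : CoeffGeomBound v 1 θ 1 := by
  intro j
  rcases eq_or_ne j 0 with rfl | hj
  · simp
  · simp [coeff_one, hj]

theorem mul {f g : R⟦X⟧} (hf : CoeffGeomBound v ε θ f) (hg : CoeffGeomBound v ε' θ g) :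
    CoeffGeomBound v (ε * ε') θ (f * g) := by
  intro j
  rw [coeff_mul]
  refine v.map_sum_le fun p hp => ?_
  rw [← Finset.HasAntidiagonal.mem_antidiagonal.mp hp, map_mul, pow_add, mul_mul_mul_comm]
  exact mul_le_mul' (hf p.1) (hg p.2)

theorem prod {ι : Type*} {s : Finset ι} {ε : ι → Γ₀} {g : ι → R⟦X⟧}
    (hg : ∀ i ∈ s, CoeffGeomBound v (ε i) θ (g i)) :
    CoeffGeomBound v (∏ i ∈ s, ε i) θ (∏ i ∈ s, g i) := by
  classical
  induction s using Finset.induction_on with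
  | empty => simpa using one
  | insert i s hi ih =>
    rw [Finset.prod_insert hi, Finset.prod_insert hi]
    exact (hg i (s.mem_insert_self i)).mul
      (ih fun j hj => hg j (Finset.mem_insert_of_mem hj))

end CoeffGeomBound

variable {F : Type*} [Field F]

theorem inv_one_add_C_mul_X (b : F) : (1 + C b * X)⁻¹ = mk fun j => (-b) ^ j := by
  refine ((eq_inv_iff_mul_eq_one (by simp)).mpr ?_).symm
  ext (_ | n)
  · simp
  · rw [mul_add, mul_one, ← mul_assoc, map_add, coeff_succ_mul_X, coeff_mul_C, coeff_one]
    simp [pow_succ]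

theorem coeffGeomBound_inv_one_add_C_mul_X_sub_one {v : Valuation F Γ₀} {b : F} {ε θ : Γ₀}
    (hε : ε ≤ 1) (hb : v b ≤ ε * θ) : CoeffGeomBound v ε θ ((1 + C b * X)⁻¹ - 1) := by
  rintro (_ | n)
  · simp
  · rw [inv_one_add_C_mul_X, map_sub, coeff_mk, coeff_one, if_neg n.succ_ne_zero, sub_zero,
      map_pow, Valuation.map_neg]
    calc v b ^ (n + 1) ≤ (ε * θ) ^ (n + 1) := pow_le_pow_left₀ zero_le hb _
      _ = ε ^ (n + 1) * θ ^ (n + 1) := mul_pow ..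
      _ ≤ ε * θ ^ (n + 1) := by
        gcongr
        simpa using pow_le_pow_right_of_le_one' hε (Nat.le_add_left 1 n)

end PowerSeries

theorem Finset.tendsto_sum_id_cofinite :
    Tendsto (fun t : Finset ℕ => ∑ i ∈ t, i) cofinite atTop := by
  refine tendsto_atTop.mpr fun N => eventually_cofinite.mpr ?_
  refine (Finset.range N).powerset.finite_toSet.subset fun t ht => ?_
  rw [Finset.mem_coe, Finset.mem_powerset]
  exact fun i hi => Finset.mem_range.mpr <|
    (Finset.single_le_sum (fun _ _ => Nat.zero_le _) hi).trans_lt (not_le.mp ht)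

open PowerSeries.WithPiTopology in
theorem multipliable_inv_one_add_C_mul_geom {F Γ₀ : Type*} [Field F]
    [LinearOrderedCommGroupWithZero Γ₀] [MulArchimedean Γ₀] [Valued F Γ₀] [CompleteSpace F]
    {w : F} (hw : Valued.v w < 1) (a : F) :
    Multipliable fun m : ℕ => (1 + C (a * w ^ m) * X)⁻¹ := by
  set g : ℕ → F⟦X⟧ := fun m => (1 + C (a * w ^ m) * X)⁻¹ - 1
  have hg : ∀ m, CoeffGeomBound Valued.v (Valued.v w ^ m) (Valued.v a) (g m) := fun m =>
    coeffGeomBound_inv_one_add_C_mul_X_sub_one (pow_le_one' hw.le m) (by simp [mul_comm])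
  suffices Multipliable fun m => 1 + g m by simpa [g] using this
  refine multipliable_one_add_of_summable_prod <|
    (summable_iff_summable_coeff F).mpr fun k => ?_
  refine NonarchimedeanAddGroup.summable_of_tendsto_cofinite_zero <|
    Valued.tendsto_zero_of_v_le (d := fun t => w ^ (∑ i ∈ t, i) * a ^ k) ?_
      (.of_forall fun t => ?_)
  · simpa using ((Valued.tendsto_zero_pow_of_v_lt_one hw).comp
      Finset.tendsto_sum_id_cofinite).mul_const (a ^ k)
  · have := CoeffGeomBound.prod (s := t) fun i _ => hg i
    simpa [← Finset.prod_pow_eq_pow_sum] using this k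

variable {u : K}

theorem hasProd_Edl (hu : Valued.v u < 1) (c : K) :
    HasProd (fun m : ℕ => (1 + C (c * u ^ (2 * m + 1)) * X)⁻¹) (Edl u c) := by
  have hu2 : Valued.v (u ^ 2) < 1 := by simpa using pow_lt_one₀ zero_le hu two_ne_zero
  have hf : (fun m : ℕ => (1 + C (c * u ^ (2 * m + 1)) * X)⁻¹)
      = fun m : ℕ => (1 + C (c * u * (u ^ 2) ^ m) * X)⁻¹ := by
    funext m
    ring_nf
  rw [Edl, hf]
  exact (multipliable_inv_one_add_C_mul_geom hu2 (c * u)).hasProd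

theorem constantCoeff_Edl (hu : Valued.v u < 1) (c : K) : constantCoeff (Edl u c) = 1 := by
  have h := (hasProd_Edl hu c).map constantCoeff
    (PowerSeries.WithPiTopology.continuous_constantCoeff K)
  simp only [Function.comp_def, constantCoeff_inv, map_add, map_one, map_mul, constantCoeff_C,
    constantCoeff_X, mul_zero, add_zero, inv_one] at h
  exact h.unique hasProd_one

theorem Edl_mul_sq (hu : Valued.v u < 1) (c : K) :
    Edl u (c * u ^ 2) = (1 + C (c * u) * X) * Edl u c := by
  have hshift : HasProd (fun m : ℕ => (1 + C (c * u ^ (2 * (m + 1) + 1)) * X)⁻¹)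
      (Edl u (c * u ^ 2)) := by
    convert hasProd_Edl hu (c * u ^ 2) using 6 with m
    ring
  have h := (hshift.prod_range_mul (k := 1)).unique (hasProd_Edl hu c)
  rw [← h, Finset.prod_range_one, ← mul_assoc, mul_zero, zero_add, pow_one,
    PowerSeries.mul_inv_cancel _ (by simp), one_mul]

theorem qbin_zero_right (z : K) (m : ℤ) : qbin z m 0 = 1 := by
  simp [qbin]

theorem qbin_zero_succ (z : K) (k : ℕ) : qbin z 0 (k + 1) = 0 := by
  rw [qbin, prod_range_succ, show (0 : ℤ) - ↑(k + 1) + 1 + ↑k = 0 by push_cast; ring]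
  simp

theorem qbin_succ_succ {z : K} (hz0 : z ≠ 0) (hz : ∀ n : ℕ, z ^ (n + 1) ≠ 1)
    (m : ℤ) (k : ℕ) :
    qbin z (m + 1) (k + 1) = qbin z m (k + 1) + z ^ (m - k) * qbin z m k := by
  set N := ∏ i ∈ range k, (1 - z ^ (m - k + 1 + i)) with hN
  have hD : ∏ i ∈ range k, (1 - z ^ (i + 1)) ≠ 0 :=
    prod_ne_zero_iff.mpr fun i _ => sub_ne_zero.mpr (hz i).symm
  have hk : 1 - z ^ (k + 1) ≠ 0 := sub_ne_zero.mpr (hz k).symm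
  have hN₁ : ∏ i ∈ range (k + 1), (1 - z ^ (m + 1 - ↑(k + 1) + 1 + i)) =
      N * (1 - z ^ (m + 1)) := by
    rw [prod_range_succ, hN]
    push_cast
    ring_nf
  have hN₂ : ∏ i ∈ range (k + 1), (1 - z ^ (m - ↑(k + 1) + 1 + i)) =
      (1 - z ^ (m - k)) * N := by
    rw [prod_range_succ', hN]
    push_cast
    ring_nf
  have hzpow : z ^ (m + 1) = z ^ (m - k) * z ^ (k + 1) := by
    rw [← zpow_natCast, ← zpow_add₀ hz0]
    congr 1
    push_cast
    ring
  rw [qbin, qbin, qbin, hN₁, hN₂, prod_range_succ, hzpow]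
  field_simp
  ring

def qbinSeries (u : K) (m : ℤ) : K⟦X⟧ :=
  mk fun k => u ^ (k ^ 2) * qbin (u ^ 2) m k

theorem qbinSeries_zero (u : K) : qbinSeries u 0 = 1 := by
  ext1 (_ | k) <;> simp [qbinSeries, qbin_zero_right, qbin_zero_succ, coeff_one]

theorem qbinSeries_succ (hu0 : u ≠ 0) (hu : ∀ n : ℕ, (u ^ 2) ^ (n + 1) ≠ 1) (m : ℤ) :
    qbinSeries u (m + 1) = qbinSeries u m * (1 + C ((u ^ 2) ^ m * u) * X) := by
  ext1 (_ | k)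
  · simp [qbinSeries, qbin_zero_right]
  · rw [mul_add, mul_one, ← mul_assoc, map_add, coeff_succ_mul_X, coeff_mul_C]
    simp only [qbinSeries, coeff_mk]
    rw [qbin_succ_succ (pow_ne_zero 2 hu0) hu]
    have hsplit : (u ^ 2) ^ m = (u ^ 2) ^ (m - k) * (u ^ 2) ^ k := by
      rw [← zpow_natCast (u ^ 2) k, ← zpow_add₀ (pow_ne_zero 2 hu0), sub_add_cancel]
    rw [hsplit]
    ring

theorem eq_of_forall_add_one_eq_mul {M : Type*} [MonoidWithZero M] [IsCancelMulZero M]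
    {a b u : ℤ → M}
    (hu : ∀ m, u m ≠ 0) (ha : ∀ m, a (m + 1) = a m * u m) (hb : ∀ m, b (m + 1) = b m * u m)
    (h0 : a 0 = b 0) (m : ℤ) : a m = b m := by
  induction m using Int.induction_on with
  | zero => exact h0
  | succ i ih => rw [ha, hb, ih]
  | pred i ih =>
    refine mul_right_cancel₀ (hu (-i - 1)) ?_
    rw [← ha, ← hb, sub_add_cancel, ih]

/-- `E(x;q)⁻¹·E(q^m x;q) = ∑_{k≥0} q^{k²/2} [m choose k]_q x^k` for any `m : ℤ`. -/
theorem E_ratio_qbinom_sum (m : ℤ) :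
    (Edl v 1)⁻¹ * Edl v (q ^ m) =
      PowerSeries.mk fun k => v ^ (k ^ 2) * qbin q m k := by
  have hv : Valued.v v < 1 := by
    rw [v, LaurentSeries.valuation_single_zpow, ← WithZero.exp_zero, WithZero.exp_lt_exp]
    norm_num
  have hv0 : v ≠ 0 := HahnSeries.single_ne_zero one_ne_zero
  have hv2 : Valued.v (v ^ 2) < 1 := by simpa using pow_lt_one₀ zero_le hv two_ne_zero
  rw [q]
  refine eq_of_forall_add_one_eq_mul (a := fun m => (Edl v 1)⁻¹ * Edl v ((v ^ 2) ^ m))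
    (fun m h => by simpa using congrArg constantCoeff h) (fun m => ?_)
    (qbinSeries_succ hv0 fun n => Valued.pow_ne_one_of_v_lt_one hv2 n.succ_ne_zero) ?_ m
  · rw [zpow_add_one₀ (pow_ne_zero 2 hv0), Edl_mul_sq hv]
    ring
  · rw [zpow_zero, PowerSeries.inv_mul_cancel _ (by simp [constantCoeff_Edl hv]), qbinSeries_zero]
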